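/- arXiv:2305.15703 — 6 statements merged into one kernel-verified Lean document; each statement's English description precedes it below -/
import Mathlib

section
/- For any two probability density functions f, g on [0,1] (with respect to a common dominating measure λ), the difference of their means satisfies |∫ y f(y) dλ(y) − ∫ y g(y) dλ(y)| ≤ √( (∫ y f(y) dλ + ∫ y g(y) dλ) · ∫ (f(y)−g(y))²/(f(y)+g(y)) dλ(y) ). -/
open MeasureTheory

/-!
Cauchy–Schwarz in discriminant form: for every real `t`, the integrand
`y (t (f + g) - (f - g))² / (f + g)` is nonnegative, and since `y ≤ 1` on `[0, 1]` its
integral is at most `t² (f̄ + ḡ) - 2 t (f̄ - ḡ) + D△(f‖g)`. A quadratic in `t` that is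
nonnegative everywhere has nonpositive discriminant, i.e. `(f̄ - ḡ)² ≤ (f̄ + ḡ) D△(f‖g)`.
-/

theorem abs_le_sqrt_of_forall_two_mul_le {x a c : ℝ} (h : ∀ t, 2 * t * x ≤ a * (t * t) + c) :
    |x| ≤ Real.sqrt (a * c) := by
  have hdiscrim : discrim a (-2 * x) c ≤ 0 :=
    discrim_le_zero fun t => by linarith [h t]
  exact Real.abs_le_sqrt (by rw [discrim] at hdiscrim; linarith)

theorem two_mul_mul_sub_le_add_sq_sub_div_add {y p q : ℝ} (hy : y ∈ Set.Icc (0 : ℝ) 1)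
    (hp : 0 ≤ p) (hq : 0 ≤ q) (t : ℝ) :
    2 * t * (y * p - y * q) ≤ (y * p + y * q) * (t * t) + (p - q) ^ 2 / (p + q) := by
  obtain ⟨hy0, hy1⟩ := hy
  rcases (add_nonneg hp hq).eq_or_lt with hs | hs
  · obtain ⟨rfl, rfl⟩ : p = 0 ∧ q = 0 := ⟨by linarith, by linarith⟩
    simp
  have hD : 0 ≤ (p - q) ^ 2 / (p + q) := by positivity
  have hsq : 0 ≤ y * (t * (p + q) - (p - q)) ^ 2 / (p + q) := by positivity
  have hexpand : y * (t * (p + q) - (p - q)) ^ 2 / (p + q) =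
      (y * p + y * q) * (t * t) - 2 * t * (y * p - y * q) + y * ((p - q) ^ 2 / (p + q)) := by
    field_simp
    ring
  nlinarith [mul_le_mul_of_nonneg_right hy1 hD]

theorem tri_disc_ineq_one_general (μ : Measure ℝ) (f g : ℝ → ℝ)
    (hsupp : μ (Set.Icc (0:ℝ) 1)ᶜ = 0)
    (hf0 : ∀ y, 0 ≤ f y) (hg0 : ∀ y, 0 ≤ g y)
    (hmf : Integrable (fun y => y * f y) μ) (hmg : Integrable (fun y => y * g y) μ)
    (hD : Integrable (fun y => (f y - g y) ^ 2 / (f y + g y)) μ) :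
    |(∫ y, y * f y ∂μ) - ∫ y, y * g y ∂μ| ≤
      Real.sqrt (((∫ y, y * f y ∂μ) + ∫ y, y * g y ∂μ) *
        ∫ y, (f y - g y) ^ 2 / (f y + g y) ∂μ) := by
  have hae : ∀ᵐ y ∂μ, y ∈ Set.Icc (0 : ℝ) 1 := mem_ae_iff.2 hsupp
  refine abs_le_sqrt_of_forall_two_mul_le fun t => ?_
  have hquad : Integrable (fun y => (y * f y + y * g y) * (t * t)) μ :=
    (hmf.add hmg).mul_const _
  rw [← integral_sub hmf hmg, ← integral_add hmf hmg, ← integral_const_mul,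
    ← integral_mul_const, ← integral_add hquad hD]
  refine integral_mono_ae ((hmf.sub hmg).const_mul _) (hquad.add hD) ?_
  filter_upwards [hae] with y hy
  exact two_mul_mul_sub_le_add_sq_sub_div_add hy (hf0 y) (hg0 y) t

/-- Inequality (△₁): for densities `f, g` on `[0,1]` w.r.t. a dominating measure `μ`,
`|f̄ − ḡ| ≤ √((f̄ + ḡ) · D△(f‖g))`. -/
theorem tri_disc_ineq_one (μ : Measure ℝ) (f g : ℝ → ℝ)
    (hsupp : μ (Set.Icc (0:ℝ) 1)ᶜ = 0)
    (hf0 : ∀ y, 0 ≤ f y) (hg0 : ∀ y, 0 ≤ g y)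
    (hfi : Integrable f μ) (hgi : Integrable g μ)
    (hf1 : ∫ y, f y ∂μ = 1) (hg1 : ∫ y, g y ∂μ = 1)
    (hmf : Integrable (fun y => y * f y) μ) (hmg : Integrable (fun y => y * g y) μ)
    (hD : Integrable (fun y => (f y - g y) ^ 2 / (f y + g y)) μ) :
    |(∫ y, y * f y ∂μ) - ∫ y, y * g y ∂μ| ≤
      Real.sqrt (((∫ y, y * f y ∂μ) + ∫ y, y * g y ∂μ) *
        ∫ y, (f y - g y) ^ 2 / (f y + g y) ∂μ) :=
  tri_disc_ineq_one_general μ f g hsupp hf0 hg0 hmf hmg hD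
end

section
/- Let c₁, c₂ ≥ 1 be constants and x ≥ 0 satisfy x ≤ c₁·log(1 + c₂·x). Then x ≤ 6·c₁·log(1 + c₁·c₂). -/
lemma aux_log_le_half (t : ℝ) (ht : 0 < t) : Real.log t ≤ t / 2 := by
  have he : (0:ℝ) < Real.exp 1 := Real.exp_pos 1
  have h1 := Real.log_le_sub_one_of_pos (show 0 < t / Real.exp 1 by positivity)
  rw [Real.log_div (ne_of_gt ht) (ne_of_gt he), Real.log_exp] at h1
  have he2 : (2:ℝ) ≤ Real.exp 1 := by
    nlinarith [Real.exp_one_gt_d9]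
  have h2 : t / Real.exp 1 ≤ t / 2 := by gcongr
  linarith

/-- Inversion of a logarithmic inequality: if `c₁, c₂ ≥ 1`, `x ≥ 0` and
`x ≤ c₁ · log(1 + c₂·x)`, then `x ≤ 6·c₁·log(1 + c₁·c₂)`. -/
theorem invert_log_inequality (c₁ c₂ x : ℝ)
    (hc₁ : 1 ≤ c₁) (hc₂ : 1 ≤ c₂) (hx : 0 ≤ x)
    (h : x ≤ c₁ * Real.log (1 + c₂ * x)) :
    x ≤ 6 * c₁ * Real.log (1 + c₁ * c₂) := by
  have hc₁0 : (0:ℝ) < c₁ := by linarith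
  have hcc : (2:ℝ) ≤ 1 + c₁ * c₂ := by nlinarith
  have hL2 : Real.log 2 ≤ Real.log (1 + c₁ * c₂) :=
    Real.log_le_log (by norm_num) hcc
  have hlog2 : (0.69:ℝ) ≤ Real.log 2 := by
    have := Real.log_two_gt_d9; linarith
  by_cases hx1 : x ≤ c₁
  · nlinarith
  · push_neg at hx1
    have hx1' : (1:ℝ) ≤ x := le_trans hc₁ hx1.le
    have hxpos : (0:ℝ) < x := by linarith
    have hstep : Real.log (1 + c₂ * x) ≤ Real.log (2 * (c₁ * c₂) * x) := by
      apply Real.log_le_log (by positivity)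
      have hcx : 1 ≤ c₂ * x := by nlinarith
      have hcx2 : c₂ * x ≤ c₁ * c₂ * x := by nlinarith
      nlinarith
    rw [Real.log_mul (by positivity) (ne_of_gt hxpos),
        Real.log_mul (by norm_num) (by positivity)] at hstep
    have hlogc : Real.log (c₁ * c₂) ≤ Real.log (1 + c₁ * c₂) :=
      Real.log_le_log (by positivity) (by linarith)
    have hlogc1 : Real.log c₁ ≤ Real.log (1 + c₁ * c₂) :=
      Real.log_le_log hc₁0 (by nlinarith)
    have hhalf := aux_log_le_half (x / c₁) (by positivity)
    rw [Real.log_div (ne_of_gt hxpos) (ne_of_gt hc₁0)] at hhalf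
    -- hhalf : log x - log c₁ ≤ (x / c₁) / 2
    have key : c₁ * Real.log x ≤ c₁ * Real.log (1 + c₁ * c₂) + x / 2 := by
      have h1 : c₁ * (Real.log x - Real.log c₁) ≤ c₁ * ((x / c₁) / 2) :=
        mul_le_mul_of_nonneg_left hhalf (le_of_lt hc₁0)
      have h2 : c₁ * ((x / c₁) / 2) = x / 2 := by field_simp
      have h3 : c₁ * Real.log c₁ ≤ c₁ * Real.log (1 + c₁ * c₂) :=
        mul_le_mul_of_nonneg_left hlogc1 (le_of_lt hc₁0)
      nlinarith
    have h4 : c₁ * Real.log 2 ≤ c₁ * Real.log (1 + c₁ * c₂) :=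
      mul_le_mul_of_nonneg_left hL2 (le_of_lt hc₁0)
    have h5 : c₁ * Real.log (c₁ * c₂) ≤ c₁ * Real.log (1 + c₁ * c₂) :=
      mul_le_mul_of_nonneg_left hlogc (le_of_lt hc₁0)
    have h6 : c₁ * Real.log (1 + c₂ * x) ≤
        c₁ * (Real.log 2 + Real.log (c₁ * c₂) + Real.log x) :=
      mul_le_mul_of_nonneg_left hstep (le_of_lt hc₁0)
    nlinarith
end

section
/- Multiplicative Azuma inequality: Let {X_t}_{t∈[N]} be random variables in [0,1] adapted to a filtration {ℱ_t}. Then for any δ ∈ (0,1), with probability at least 1−δ, Σ_{t=1}^N E[X_t | ℱ_{t−1}] ≤ 2·Σ_{t=1}^N X_t + 2·log(1/δ). -/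
open MeasureTheory Real Finset Filter

/-!
With `c = 1 - e⁻¹`, convexity of `exp` gives `e^{-x} ≤ 1 - c x` on `[0,1]`, hence
`E[e^{-X_{t+1}} | ℱ_t] ≤ 1 - c E[X_{t+1} | ℱ_t] ≤ e^{-c E[X_{t+1} | ℱ_t]}`. So
`exp (∑_{t<n} (c E[X_{t+1} | ℱ_t] - X_{t+1}))` is a supermartingale starting at `1`, and
Markov's inequality shows that outside an event of probability at most `δ`,
`c ∑ E[X_{t+1} | ℱ_t] ≤ ∑ X_{t+1} + log (1/δ)`. Conclude with `c ≥ 1/2`.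
-/

lemma exp_neg_le_one_sub_mul_of_mem_Icc {x : ℝ} (hx : x ∈ Set.Icc (0 : ℝ) 1) :
    exp (-x) ≤ 1 - (1 - exp (-1)) * x := by
  have h := convexOn_exp.2 (Set.mem_univ (-1)) (Set.mem_univ 0) hx.1 (sub_nonneg.2 hx.2)
    (add_sub_cancel x 1)
  simp only [smul_eq_mul, mul_neg, mul_one, mul_zero, add_zero, exp_zero] at h
  linarith

lemma one_half_le_one_sub_exp_neg_one : 1 / 2 ≤ 1 - exp (-1) := by
  have : 2 ≤ exp 1 := by linarith [add_one_le_exp (1 : ℝ)]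
  rw [exp_neg]
  linarith [inv_anti₀ (by norm_num) this]

lemma one_sub_le_measureReal_le_log_of_integral_exp_le_one {Ω : Type*} {m0 : MeasurableSpace Ω}
    {μ : Measure Ω} [IsProbabilityMeasure μ] {S : Ω → ℝ}
    (hS : Integrable (fun ω => exp (S ω)) μ) (hS1 : ∫ ω, exp (S ω) ∂μ ≤ 1)
    {δ : ℝ} (hδ : 0 < δ) :
    1 - δ ≤ μ.real {ω | S ω ≤ log (1 / δ)} := by
  set A := {ω | S ω ≤ log (1 / δ)}
  have hmarkov : δ⁻¹ * μ.real {ω | δ⁻¹ ≤ exp (S ω)} ≤ 1 :=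
    (mul_meas_ge_le_integral_of_nonneg (ae_of_all _ fun ω => (exp_pos _).le) hS δ⁻¹).trans hS1
  have hAc : μ.real Aᶜ ≤ δ := by
    calc μ.real Aᶜ ≤ μ.real {ω | δ⁻¹ ≤ exp (S ω)} := by
          refine measureReal_mono fun ω hω => ?_
          simp only [A, Set.mem_compl_iff, Set.mem_ofPred_eq, not_le, one_div] at hω ⊢
          rw [← exp_log (inv_pos.2 hδ)]
          exact exp_le_exp.2 hω.le
      _ ≤ δ := by rwa [inv_mul_le_iff₀ hδ, mul_one] at hmarkov
  have hcover : 1 ≤ μ.real A + μ.real Aᶜ := by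
    calc (1 : ℝ) = μ.real (A ∪ Aᶜ) := by simp
      _ ≤ μ.real A + μ.real Aᶜ := measureReal_union_le A Aᶜ
  linarith

section CondExp

variable {Ω : Type*} {m m0 : MeasurableSpace Ω} {μ : Measure Ω}

lemma condExp_mem_Icc_zero_one {f : Ω → ℝ}
    (hf : ∀ᵐ ω ∂μ, f ω ∈ Set.Icc (0 : ℝ) 1) :
    ∀ᵐ ω ∂μ, μ[f|m] ω ∈ Set.Icc (0 : ℝ) 1 := by
  filter_upwards [condExp_nonneg (m := m) (hf.mono fun _ h => h.1),
    condExp_le_nonneg_const (m := m) zero_le_one (hf.mono fun _ h => h.2)] with ω h0 h1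
  exact ⟨h0, h1⟩

lemma integrable_exp_neg_of_mem_Icc [IsFiniteMeasure μ] {f : Ω → ℝ}
    (hf : AEMeasurable f μ) (hf01 : ∀ᵐ ω ∂μ, f ω ∈ Set.Icc (0 : ℝ) 1) :
    Integrable (fun ω => exp (-f ω)) μ := by
  refine Integrable.of_mem_Icc 0 1 (continuous_exp.measurable.comp_aemeasurable hf.neg) ?_
  filter_upwards [hf01] with ω hω
  exact ⟨(exp_pos _).le, exp_le_one_iff.2 (by linarith [hω.1])⟩

lemma condExp_exp_neg_le [IsFiniteMeasure μ] (hm : m ≤ m0) {f : Ω → ℝ}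
    (hf : Integrable f μ) (hf01 : ∀ᵐ ω ∂μ, f ω ∈ Set.Icc (0 : ℝ) 1) :
    μ[fun ω => exp (-f ω)|m] ≤ᵐ[μ] fun ω => exp (-((1 - exp (-1)) * μ[f|m] ω)) := by
  set c := 1 - exp (-1)
  have hchord : μ[fun ω => exp (-f ω)|m] ≤ᵐ[μ] μ[(fun _ => (1 : ℝ)) - c • f|m] :=
    condExp_mono (integrable_exp_neg_of_mem_Icc hf.1.aemeasurable hf01)
      ((integrable_const 1).sub (hf.smul c))
      (hf01.mono fun ω hω => by simpa using exp_neg_le_one_sub_mul_of_mem_Icc hω)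
  have hlinear : μ[(fun _ => (1 : ℝ)) - c • f|m] =ᵐ[μ] fun ω => 1 - c * μ[f|m] ω := by
    filter_upwards [condExp_sub (m := m) (integrable_const 1) (hf.smul c),
      condExp_smul (μ := μ) (m := m) c f] with ω hsub hsmul
    simp [hsub, hsmul, condExp_const hm]
  filter_upwards [hchord, hlinear] with ω hω hω'
  linarith [add_one_le_exp (-(c * μ[f|m] ω))]

end CondExp

noncomputable def azumaExponent {Ω : Type*} {m0 : MeasurableSpace Ω} (μ : Measure Ω)
    (ℱ : Filtration ℕ m0) (X : ℕ → Ω → ℝ) (n : ℕ) (ω : Ω) : ℝ :=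
  ∑ t ∈ range n, ((1 - exp (-1)) * μ[X (t + 1)|ℱ t] ω - X (t + 1) ω)

namespace azumaExponent

variable {Ω : Type*} {m0 : MeasurableSpace Ω} {μ : Measure Ω} {ℱ : Filtration ℕ m0}
  {X : ℕ → Ω → ℝ}

lemma exp_succ (n : ℕ) (ω : Ω) :
    exp (azumaExponent μ ℱ X (n + 1) ω) =
      exp (azumaExponent μ ℱ X n ω) * exp ((1 - exp (-1)) * μ[X (n + 1)|ℱ n] ω) *
        exp (-X (n + 1) ω) := by
  rw [← exp_add, ← exp_add, azumaExponent, azumaExponent, sum_range_succ]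
  ring_nf

lemma stronglyMeasurable (hX : StronglyAdapted ℱ X) (n : ℕ) :
    StronglyMeasurable[ℱ n] (azumaExponent μ ℱ X n) := by
  refine Finset.stronglyMeasurable_fun_sum _ fun t ht => ?_
  have htn : t < n := mem_range.mp ht
  exact ((stronglyMeasurable_condExp.mono (ℱ.mono htn.le)).const_mul _).sub
    ((hX (t + 1)).mono (ℱ.mono htn))

lemma le_of_nonneg_of_condExp_le_one {ω : Ω}
    (hω : ∀ t, 0 ≤ X (t + 1) ω ∧ μ[X (t + 1)|ℱ t] ω ≤ 1) (n : ℕ) :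
    azumaExponent μ ℱ X n ω ≤ n := by
  have hc := one_half_le_one_sub_exp_neg_one
  have hc1 : 1 - exp (-1) ≤ 1 := by linarith [exp_pos (-1)]
  calc azumaExponent μ ℱ X n ω ≤ ∑ t ∈ range n, (1 : ℝ) := by
        refine sum_le_sum fun t _ => ?_
        obtain ⟨hX0, hY1⟩ := hω t
        nlinarith
    _ = n := by simp

lemma integrable_exp [IsFiniteMeasure μ] (hX : StronglyAdapted ℱ X)
    (hX01 : ∀ t, ∀ᵐ ω ∂μ, X t ω ∈ Set.Icc (0 : ℝ) 1) (n : ℕ) :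
    Integrable (fun ω => exp (azumaExponent μ ℱ X n ω)) μ := by
  have hmeas :=
    continuous_exp.comp_stronglyMeasurable ((stronglyMeasurable (μ := μ) hX n).mono (ℱ.le n))
  refine Integrable.of_bound hmeas.aestronglyMeasurable (exp n) ?_
  have hY := fun t => condExp_mem_Icc_zero_one (m := ℱ t) (hX01 (t + 1))
  filter_upwards [ae_all_iff.2 fun t => (hX01 (t + 1)).and (hY t)] with ω hω
  rw [norm_of_nonneg (exp_pos _).le]
  exact exp_le_exp.2 (le_of_nonneg_of_condExp_le_one (fun t => ⟨(hω t).1.1, (hω t).2.2⟩) n)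

lemma condExp_exp_succ_le [IsFiniteMeasure μ] (hX : StronglyAdapted ℱ X)
    (hX01 : ∀ t, ∀ᵐ ω ∂μ, X t ω ∈ Set.Icc (0 : ℝ) 1) (n : ℕ) :
    μ[fun ω => exp (azumaExponent μ ℱ X (n + 1) ω)|ℱ n] ≤ᵐ[μ]
      fun ω => exp (azumaExponent μ ℱ X n ω) := by
  set c := 1 - exp (-1)
  have hXint : Integrable (X (n + 1)) μ :=
    Integrable.of_mem_Icc 0 1 ((hX (n + 1)).mono (ℱ.le _)).measurable.aemeasurable (hX01 (n + 1))
  set f : Ω → ℝ := fun ω =>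
    exp (azumaExponent μ ℱ X n ω) * exp (c * μ[X (n + 1)|ℱ n] ω)
  set g : Ω → ℝ := fun ω => exp (-X (n + 1) ω)
  have hf : StronglyMeasurable[ℱ n] f :=
    (continuous_exp.comp_stronglyMeasurable (stronglyMeasurable hX n)).mul
      (continuous_exp.comp_stronglyMeasurable (stronglyMeasurable_condExp.const_mul c))
  have hg : Integrable g μ := integrable_exp_neg_of_mem_Icc hXint.1.aemeasurable (hX01 (n + 1))
  have hfg : (fun ω => exp (azumaExponent μ ℱ X (n + 1) ω)) = f * g := funext (exp_succ n)
  have hfg_int : Integrable (f * g) μ := hfg ▸ integrable_exp hX hX01 (n + 1)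
  rw [hfg]
  filter_upwards [condExp_mul_of_stronglyMeasurable_left hf hfg_int hg,
    condExp_exp_neg_le (ℱ.le n) hXint (hX01 (n + 1))] with ω hpull hg_le
  calc μ[f * g|ℱ n] ω = f ω * μ[g|ℱ n] ω := hpull
    _ ≤ f ω * exp (-(c * μ[X (n + 1)|ℱ n] ω)) := by gcongr
    _ = exp (azumaExponent μ ℱ X n ω) := by
        rw [mul_assoc, ← exp_add, add_neg_cancel, exp_zero, mul_one]

lemma supermartingale_exp [IsFiniteMeasure μ] (hX : StronglyAdapted ℱ X)
    (hX01 : ∀ t, ∀ᵐ ω ∂μ, X t ω ∈ Set.Icc (0 : ℝ) 1) :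
    Supermartingale (fun n ω => exp (azumaExponent μ ℱ X n ω)) ℱ μ :=
  supermartingale_nat (fun n => continuous_exp.comp_stronglyMeasurable (stronglyMeasurable hX n))
    (integrable_exp hX hX01) (condExp_exp_succ_le hX hX01)

lemma integral_exp_le_one [IsProbabilityMeasure μ] (hX : StronglyAdapted ℱ X)
    (hX01 : ∀ t, ∀ᵐ ω ∂μ, X t ω ∈ Set.Icc (0 : ℝ) 1) (n : ℕ) :
    ∫ ω, exp (azumaExponent μ ℱ X n ω) ∂μ ≤ 1 := by
  have := (supermartingale_exp hX hX01).setIntegral_le (Nat.zero_le n) MeasurableSet.univ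
  simpa [azumaExponent] using this

lemma sum_condExp_le_of_le {ω : Ω} {N : ℕ} {L : ℝ} (hY : ∀ t, 0 ≤ μ[X (t + 1)|ℱ t] ω)
    (h : azumaExponent μ ℱ X N ω ≤ L) :
    ∑ t ∈ range N, μ[X (t + 1)|ℱ t] ω ≤ 2 * ∑ t ∈ range N, X (t + 1) ω + 2 * L := by
  rw [azumaExponent, sum_sub_distrib, ← mul_sum] at h
  have hc := one_half_le_one_sub_exp_neg_one
  have hY_sum : 0 ≤ ∑ t ∈ range N, μ[X (t + 1)|ℱ t] ω := sum_nonneg fun t _ => hY t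
  nlinarith

end azumaExponent

theorem multiplicative_azuma_general {Ω : Type*} {m0 : MeasurableSpace Ω}
    (μ : Measure Ω) [IsProbabilityMeasure μ]
    (ℱ : Filtration ℕ m0) (X : ℕ → Ω → ℝ) (N : ℕ) (δ : ℝ)
    (hδ0 : 0 < δ)
    (hadapted : StronglyAdapted ℱ X)
    (hbdd : ∀ t, ∀ᵐ ω ∂μ, X t ω ∈ Set.Icc (0 : ℝ) 1) :
    (1 : ℝ) - δ ≤
      (μ {ω | ∑ t ∈ Finset.range N, (μ[X (t + 1)|ℱ t]) ω ≤
          2 * ∑ t ∈ Finset.range N, X (t + 1) ω + 2 * Real.log (1 / δ)}).toReal := by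
  have hY : ∀ᵐ ω ∂μ, ∀ t, 0 ≤ μ[X (t + 1)|ℱ t] ω :=
    ae_all_iff.2 fun t => (condExp_mem_Icc_zero_one (hbdd (t + 1))).mono fun _ h => h.1
  calc 1 - δ ≤ μ.real {ω | azumaExponent μ ℱ X N ω ≤ log (1 / δ)} :=
        one_sub_le_measureReal_le_log_of_integral_exp_le_one
          (azumaExponent.integrable_exp hadapted hbdd N)
          (azumaExponent.integral_exp_le_one hadapted hbdd N) hδ0
    _ ≤ _ := ENNReal.toReal_mono (measure_ne_top _ _) <| measure_mono_ae <| by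
        filter_upwards [hY] with ω hω using azumaExponent.sum_condExp_le_of_le hω

/-- Multiplicative Azuma inequality: for an adapted sequence `X` with values in
`[0,1]`, with probability at least `1 − δ`,
`Σ_{t<N} E[X_{t+1} | ℱ_t] ≤ 2·Σ_{t<N} X_{t+1} + 2·log(1/δ)`. -/
theorem multiplicative_azuma {Ω : Type*} {m0 : MeasurableSpace Ω}
    (μ : Measure Ω) [IsProbabilityMeasure μ]
    (ℱ : Filtration ℕ m0) (X : ℕ → Ω → ℝ) (N : ℕ) (δ : ℝ)
    (hδ0 : 0 < δ) (hδ1 : δ < 1)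
    (hadapted : StronglyAdapted ℱ X)
    (hbdd : ∀ t, ∀ᵐ ω ∂μ, X t ω ∈ Set.Icc (0 : ℝ) 1)
    (hint : ∀ t, Integrable (X t) μ) :
    (1 : ℝ) - δ ≤
      (μ {ω | ∑ t ∈ Finset.range N, (μ[X (t + 1)|ℱ t]) ω ≤
          2 * ∑ t ∈ Finset.range N, X (t + 1) ω + 2 * Real.log (1 / δ)}).toReal :=
  multiplicative_azuma_general μ ℱ X N δ hδ0 hadapted hbdd
end

section
/- Q-type ℓ₂ distributional eluder dimension bound for tabular MDPs: Let 𝒮 be a finite set of size SA, Ψ ⊆ {f : 𝒮 → [0,1]} any function class, and 𝒟 any set of probability distributions on 𝒮 (viewed as vectors in ℝ^{SA}). Then DE₂(Ψ, 𝒟, ε) ≤ 24·SA·log(1 + 4SA/ε²). -/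
/-!
Write `vₜ` for the probability vector of `d⁽ᵗ⁾` and `Σₜ = λI + ∑_{i<t} vᵢvᵢᵀ` with `λ = ε²/|S|`.
If `ψ` witnesses step `t` of an eluder sequence at level `ε'`, then `ψᵀΣₜψ ≤ λ|S| + ε'² ≤ 2ε'²`
because `ψ` is `[0,1]`-valued, while `(vₜ ⬝ ψ)² > ε'²`; Cauchy–Schwarz in the geometry of `Σₜ`
forces `vₜᵀΣₜ⁻¹vₜ > 1/2`. By the matrix determinant lemma every step multiplies `det Σₜ` by at
least `3/2`, while AM–GM on the eigenvalues gives `det Σ_T ≤ (tr Σ_T / |S|)^|S| ≤ (λ + T/|S|)^|S|`.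
Hence `(3/2)^T ≤ (1 + T/ε²)^|S|`, i.e. `T ≤ 3|S| log(1 + T/ε²)`, and inverting this implicit
inequality gives the bound.
-/

/-- Expectation of `f : S → ℝ` under a distribution `d` on a finite set `S`. -/
noncomputable def pexp {S : Type*} [Fintype S] (d : PMF S) (f : S → ℝ) : ℝ :=
  ∑ s : S, (d s).toReal * f s

/-- `d 0, …, d (n-1)` is an `(ε', ℓ₂)`-eluder sequence for some common `ε' ≥ ε`,
with all elements drawn from `𝒟`. -/
def EluderSeq₂ {S : Type*} [Fintype S] (Ψ : Set (S → ℝ)) (𝒟 : Set (PMF S))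
    (ε : ℝ) (n : ℕ) (d : ℕ → PMF S) : Prop :=
  (∀ i < n, d i ∈ 𝒟) ∧ ∃ ε' ≥ ε, ∀ t < n, ∃ ψ ∈ Ψ,
    ε' < |pexp (d t) ψ| ∧ ∑ i ∈ Finset.range t, |pexp (d i) ψ| ^ 2 ≤ ε' ^ 2

/-- The `ℓ₂` distributional eluder dimension. -/
noncomputable def DEdim₂ {S : Type*} [Fintype S] (Ψ : Set (S → ℝ))
    (𝒟 : Set (PMF S)) (ε : ℝ) : ℕ∞ :=
  sSup {n : ℕ∞ | ∃ m : ℕ, n = (m : ℕ∞) ∧ ∃ d : ℕ → PMF S, EluderSeq₂ Ψ 𝒟 ε m d}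

open Matrix Finset

theorem Real.prod_le_sum_div_card_pow {ι : Type*} (s : Finset ι) (z : ι → ℝ)
    (hz : ∀ i ∈ s, 0 ≤ z i) : ∏ i ∈ s, z i ≤ ((∑ i ∈ s, z i) / #s) ^ #s := by
  rcases s.eq_empty_or_nonempty with rfl | hs
  · simp
  have hcard : (0 : ℝ) < #s := by exact_mod_cast hs.card_pos
  have amgm := Real.geom_mean_le_arith_mean_weighted s (fun _ => (#s : ℝ)⁻¹) z
    (fun _ _ => by positivity) (by simp [hcard.ne']) hz
  rw [← Finset.mul_sum, inv_mul_eq_div] at amgm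
  calc ∏ i ∈ s, z i = (∏ i ∈ s, z i ^ (#s : ℝ)⁻¹) ^ #s := by
        rw [← Finset.prod_pow]
        refine Finset.prod_congr rfl fun i hi => ?_
        rw [← Real.rpow_natCast, ← Real.rpow_mul (hz i hi), inv_mul_cancel₀ hcard.ne',
          Real.rpow_one]
    _ ≤ ((∑ i ∈ s, z i) / #s) ^ #s := by
        gcongr
        exact prod_nonneg fun i hi => Real.rpow_nonneg (hz i hi) _

namespace Matrix

variable {n : Type*} [Fintype n]

theorem PosSemidef.sq_dotProduct_mulVec_le {M : Matrix n n ℝ} (hM : M.PosSemidef)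
    (x y : n → ℝ) : (y ⬝ᵥ M *ᵥ x) ^ 2 ≤ (x ⬝ᵥ M *ᵥ x) * (y ⬝ᵥ M *ᵥ y) := by
  have hsymm : x ⬝ᵥ M *ᵥ y = y ⬝ᵥ M *ᵥ x := by
    rw [dotProduct_mulVec, ← mulVec_transpose, ← conjTranspose_eq_transpose_of_trivial,
      hM.isHermitian.eq, dotProduct_comm]
  have hdisc : discrim (x ⬝ᵥ M *ᵥ x) (2 * (y ⬝ᵥ M *ᵥ x)) (y ⬝ᵥ M *ᵥ y) ≤ 0 :=
    discrim_le_zero fun t => by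
      have := hM.dotProduct_mulVec_nonneg (t • x + y)
      simp only [star_trivial, mulVec_add, mulVec_smul, dotProduct_add, add_dotProduct,
        dotProduct_smul, smul_dotProduct, smul_eq_mul, hsymm] at this
      linarith
  rw [discrim] at hdisc
  nlinarith

theorem PosDef.sq_dotProduct_le [DecidableEq n] {M : Matrix n n ℝ} (hM : M.PosDef)
    (v w : n → ℝ) : (v ⬝ᵥ w) ^ 2 ≤ (v ⬝ᵥ M⁻¹ *ᵥ v) * (w ⬝ᵥ M *ᵥ w) := by
  have hM_inv : M *ᵥ (M⁻¹ *ᵥ v) = v := by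
    rw [mulVec_mulVec, mul_nonsing_inv _ hM.det_pos.ne'.isUnit, one_mulVec]
  have := hM.posSemidef.sq_dotProduct_mulVec_le (M⁻¹ *ᵥ v) w
  rwa [hM_inv, dotProduct_comm (M⁻¹ *ᵥ v), dotProduct_comm w] at this

theorem PosDef.half_lt_dotProduct_inv_mulVec [DecidableEq n] {M : Matrix n n ℝ}
    (hM : M.PosDef) {v w : n → ℝ} {r : ℝ} (hv : r < (v ⬝ᵥ w) ^ 2)
    (hw : w ⬝ᵥ M *ᵥ w ≤ 2 * r) : 1 / 2 < v ⬝ᵥ M⁻¹ *ᵥ v := by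
  have hcs := hM.sq_dotProduct_le v w
  have hq : 0 ≤ v ⬝ᵥ M⁻¹ *ᵥ v := by simpa using hM.inv.posSemidef.dotProduct_mulVec_nonneg v
  have hp : 0 ≤ w ⬝ᵥ M *ᵥ w := by simpa using hM.posSemidef.dotProduct_mulVec_nonneg w
  nlinarith

theorem det_add_vecMulVec {R : Type*} [CommRing R] [DecidableEq n] {M : Matrix n n R}
    (hM : IsUnit M.det) (u v : n → R) :
    (M + vecMulVec u v).det = M.det * (1 + v ⬝ᵥ M⁻¹ *ᵥ u) := by
  rw [vecMulVec_eq Unit, det_add_replicateCol_mul_replicateRow hM]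
  congr 1
  rw [det_unique, Matrix.mul_assoc, ← replicateCol_mulVec]
  simp [replicateRow_mul_replicateCol_apply]

theorem PosSemidef.det_le_trace_div_card_pow [DecidableEq n] {M : Matrix n n ℝ}
    (hM : M.PosSemidef) : M.det ≤ (M.trace / Fintype.card n) ^ Fintype.card n := by
  have := Real.prod_le_sum_div_card_pow univ hM.isHermitian.eigenvalues
    fun i _ => hM.eigenvalues_nonneg i
  simpa [hM.isHermitian.det_eq_prod_eigenvalues, hM.isHermitian.trace_eq_sum_eigenvalues]
    using this

end Matrix

theorem Real.le_four_mul_log_of_le_mul_log {y c : ℝ} (hy : 0 ≤ y) (hc : 0 ≤ c)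
    (h : y ≤ c * log (1 + y)) : y ≤ 4 * c * log (1 + c) := by
  have hlog_nonneg : 0 ≤ log (1 + c) := log_nonneg (by linarith)
  rcases lt_or_ge c (1 / 2) with hc_small | hc_large
  · have : log (1 + y) ≤ y := by linarith [log_le_sub_one_of_pos (by linarith : 0 < 1 + y)]
    nlinarith
  -- the tangent line of `log` at `2c`, together with `2c ≤ (1 + c)²`
  have hc_pos : 0 < c := by linarith
  have htangent : log (1 + y) ≤ log (2 * c) + (1 + y) / (2 * c) - 1 := by
    have := log_le_sub_one_of_pos (by positivity : 0 < (1 + y) / (2 * c))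
    rw [log_div (by linarith) (by positivity)] at this
    linarith
  have h2c : log (2 * c) ≤ 2 * log (1 + c) := by
    calc log (2 * c) ≤ log ((1 + c) ^ 2) := log_le_log (by positivity) (by nlinarith)
      _ = 2 * log (1 + c) := by rw [log_pow, Nat.cast_ofNat]
  have hscale : c * ((1 + y) / (2 * c)) = (1 + y) / 2 := by field_simp
  nlinarith [mul_le_mul_of_nonneg_left htangent hc, mul_le_mul_of_nonneg_left h2c hc]

theorem Real.le_four_mul_log_one_add_div_of_le {x a b : ℝ} (hx : 0 ≤ x) (ha : 0 ≤ a)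
    (hb : 0 < b) (h : x ≤ a * log (1 + x / b)) : x ≤ 4 * a * log (1 + a / b) := by
  have hxb : x / b ≤ a / b * log (1 + x / b) := by
    rw [div_mul_eq_mul_div]; exact div_le_div_of_nonneg_right h hb.le
  have := le_four_mul_log_of_le_mul_log (by positivity) (by positivity) hxb
  calc x = b * (x / b) := by field_simp
    _ ≤ b * (4 * (a / b) * log (1 + a / b)) := by gcongr
    _ = 4 * a * log (1 + a / b) := by field_simp

section RidgeCov

variable {n : Type*} [DecidableEq n]

def ridgeCov (lam : ℝ) (v : ℕ → n → ℝ) (t : ℕ) : Matrix n n ℝ :=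
  lam • 1 + ∑ i ∈ range t, vecMulVec (v i) (v i)

theorem ridgeCov_succ (lam : ℝ) (v : ℕ → n → ℝ) (t : ℕ) :
    ridgeCov lam v (t + 1) = ridgeCov lam v t + vecMulVec (v t) (v t) := by
  simp only [ridgeCov, sum_range_succ, add_assoc]

variable [Fintype n]

theorem posDef_ridgeCov {lam : ℝ} (hlam : 0 < lam) (v : ℕ → n → ℝ) (t : ℕ) :
    (ridgeCov lam v t).PosDef :=
  (PosDef.one.smul hlam).add_posSemidef <| posSemidef_sum _ fun i _ => by
    simpa using posSemidef_vecMulVec_self_star (v i)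

theorem dotProduct_ridgeCov_mulVec (lam : ℝ) (v : ℕ → n → ℝ) (t : ℕ) (x : n → ℝ) :
    x ⬝ᵥ ridgeCov lam v t *ᵥ x = lam * (x ⬝ᵥ x) + ∑ i ∈ range t, (v i ⬝ᵥ x) ^ 2 := by
  simp only [ridgeCov, add_mulVec, smul_mulVec, one_mulVec, sum_mulVec, vecMulVec_mulVec,
    dotProduct_add, dotProduct_sum, dotProduct_smul, op_smul_eq_smul, smul_eq_mul]
  simp only [dotProduct_comm x, sq]

theorem trace_ridgeCov (lam : ℝ) (v : ℕ → n → ℝ) (t : ℕ) :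
    (ridgeCov lam v t).trace = lam * Fintype.card n + ∑ i ∈ range t, v i ⬝ᵥ v i := by
  simp [ridgeCov, trace_sum, trace_vecMulVec]

variable {lam c : ℝ} {v : ℕ → n → ℝ} {T : ℕ}

theorem pow_mul_pow_le_det_ridgeCov (hlam : 0 < lam) (hc : 0 ≤ c)
    (hq : ∀ t < T, c ≤ v t ⬝ᵥ (ridgeCov lam v t)⁻¹ *ᵥ v t) :
    lam ^ Fintype.card n * (1 + c) ^ T ≤ (ridgeCov lam v T).det := by
  induction T with
  | zero => simp [ridgeCov]
  | succ T ih =>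
    have hdet := (posDef_ridgeCov hlam v T).det_pos
    rw [ridgeCov_succ, Matrix.det_add_vecMulVec hdet.ne'.isUnit, pow_succ, ← mul_assoc]
    exact mul_le_mul (ih fun t ht => hq t (by omega)) (by linarith [hq T (by omega)])
      (by positivity) hdet.le

theorem det_ridgeCov_le [Nonempty n] (hlam : 0 < lam) (hv : ∀ i < T, v i ⬝ᵥ v i ≤ 1) :
    (ridgeCov lam v T).det ≤ (lam + T / Fintype.card n) ^ Fintype.card n := by
  have hN : (0 : ℝ) < Fintype.card n := by exact_mod_cast Fintype.card_pos
  have htrace : (ridgeCov lam v T).trace ≤ lam * Fintype.card n + T := by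
    rw [trace_ridgeCov]
    have := Finset.sum_le_sum fun i hi => hv i (mem_range.mp hi)
    simp only [sum_const, card_range, nsmul_eq_mul, mul_one] at this
    linarith
  calc (ridgeCov lam v T).det
      ≤ ((ridgeCov lam v T).trace / Fintype.card n) ^ Fintype.card n :=
        (posDef_ridgeCov hlam v T).posSemidef.det_le_trace_div_card_pow
    _ ≤ (lam + T / Fintype.card n) ^ Fintype.card n := by
        gcongr
        · exact div_nonneg (posDef_ridgeCov hlam v T).posSemidef.trace_nonneg hN.le
        · rw [div_le_iff₀ hN, add_mul, div_mul_cancel₀ _ hN.ne']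
          exact htrace

theorem one_add_pow_le_of_forall_le_dotProduct_ridgeCov_inv [Nonempty n] (hlam : 0 < lam)
    (hc : 0 ≤ c) (hv : ∀ i < T, v i ⬝ᵥ v i ≤ 1)
    (hq : ∀ t < T, c ≤ v t ⬝ᵥ (ridgeCov lam v t)⁻¹ *ᵥ v t) :
    (1 + c) ^ T ≤ (1 + T / (lam * Fintype.card n)) ^ Fintype.card n := by
  have hN : (0 : ℝ) < Fintype.card n := by exact_mod_cast Fintype.card_pos
  have h := (pow_mul_pow_le_det_ridgeCov hlam hc hq).trans (det_ridgeCov_le hlam hv)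
  rwa [show lam + T / Fintype.card n = lam * (1 + T / (lam * Fintype.card n)) by field_simp,
    mul_pow, mul_le_mul_iff_right₀ (by positivity)] at h

end RidgeCov

theorem exists_eluderSeq₂_of_DEdim₂_eq {S : Type*} [Fintype S] {Ψ : Set (S → ℝ)}
    {𝒟 : Set (PMF S)} {ε : ℝ} {m : ℕ} (hm : DEdim₂ Ψ 𝒟 ε = m) (hm0 : m ≠ 0) :
    ∃ d, EluderSeq₂ Ψ 𝒟 ε m d := by
  set L := {n : ℕ∞ | ∃ m : ℕ, n = (m : ℕ∞) ∧ ∃ d : ℕ → PMF S, EluderSeq₂ Ψ 𝒟 ε m d}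
  have hL : sSup L = m := hm
  have : Nonempty L := by
    by_contra hempty
    rw [Set.nonempty_coe_sort.not, Set.not_nonempty_iff_eq_empty] at hempty
    rw [hempty, sSup_empty] at hL
    exact hm0 (by simpa using hL.symm)
  obtain ⟨m', hm', d, hd⟩ := ENat.sSup_mem_of_nonempty_of_lt_top (hL ▸ ENat.natCast_lt_top m)
  rw [hL, Nat.cast_inj] at hm'
  exact ⟨d, hm' ▸ hd⟩

theorem PMF.sum_toReal {S : Type*} [Fintype S] (d : PMF S) : ∑ s, (d s).toReal = 1 := by
  have h := d.tsum_coe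
  rw [tsum_fintype] at h
  rw [← ENNReal.toReal_sum fun s _ => d.apply_ne_top s, h, ENNReal.toReal_one]

theorem PMF.dotProduct_toReal_self_le_one {S : Type*} [Fintype S] (d : PMF S) :
    (fun s => (d s).toReal) ⬝ᵥ (fun s => (d s).toReal) ≤ 1 := by
  calc ∑ s, (d s).toReal * (d s).toReal ≤ ∑ s, (d s).toReal :=
        sum_le_sum fun s _ => mul_le_of_le_one_right ENNReal.toReal_nonneg
          (ENNReal.toReal_le_of_le_ofReal zero_le_one (by simpa using d.coe_le_one s))
    _ = 1 := d.sum_toReal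

theorem EluderSeq₂.three_halves_pow_le {S : Type*} [Fintype S] {Ψ : Set (S → ℝ)}
    {𝒟 : Set (PMF S)} {ε : ℝ} {T : ℕ} {d : ℕ → PMF S} (hd : EluderSeq₂ Ψ 𝒟 ε T d)
    (hε : 0 < ε) (hΨ : ∀ f ∈ Ψ, ∀ s, f s ∈ Set.Icc (0 : ℝ) 1) :
    (3 / 2 : ℝ) ^ T ≤ (1 + T / ε ^ 2) ^ Fintype.card S := by
  classical
  obtain ⟨-, ε', hεε', hseq⟩ := hd
  have : Nonempty S := let ⟨s, _⟩ := (d 0).support_nonempty; ⟨s⟩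
  have hΨ_norm : ∀ ψ ∈ Ψ, ψ ⬝ᵥ ψ ≤ Fintype.card S := fun ψ hψ => by
    simpa [dotProduct] using sum_le_sum fun s (_ : s ∈ univ) =>
      mul_le_one₀ (hΨ ψ hψ s).2 (hΨ ψ hψ s).1 (hΨ ψ hψ s).2
  set N := Fintype.card S
  have hN : (0 : ℝ) < N := by exact_mod_cast Fintype.card_pos
  set v : ℕ → S → ℝ := fun i s => (d i s).toReal
  have hpexp (i : ℕ) (f : S → ℝ) : pexp (d i) f = v i ⬝ᵥ f := rfl
  have hstep : ∀ t < T, 1 / 2 ≤ v t ⬝ᵥ (ridgeCov (ε ^ 2 / N) v t)⁻¹ *ᵥ v t := by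
    intro t ht
    obtain ⟨ψ, hψ, hlarge, hsmall⟩ := hseq t ht
    refine ((posDef_ridgeCov (by positivity) v t).half_lt_dotProduct_inv_mulVec
      (w := ψ) (r := ε' ^ 2) ?_ ?_).le
    · rw [← hpexp, ← sq_abs (pexp (d t) ψ)]
      exact pow_lt_pow_left₀ hlarge (hε.le.trans hεε') two_ne_zero
    · simp only [hpexp, sq_abs] at hsmall
      have : ε ^ 2 / N * (ψ ⬝ᵥ ψ) ≤ ε' ^ 2 := calc
        ε ^ 2 / N * (ψ ⬝ᵥ ψ) ≤ ε ^ 2 / N * N := by gcongr; exact hΨ_norm ψ hψ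
        _ = ε ^ 2 := div_mul_cancel₀ _ hN.ne'
        _ ≤ ε' ^ 2 := by gcongr
      rw [dotProduct_ridgeCov_mulVec]
      linarith
  have := one_add_pow_le_of_forall_le_dotProduct_ridgeCov_inv (by positivity) (by norm_num)
    (fun i _ => (d i).dotProduct_toReal_self_le_one) hstep
  rwa [div_mul_cancel₀ _ hN.ne', show (1 : ℝ) + 1 / 2 = 3 / 2 by norm_num] at this

theorem EluderSeq₂.length_le_mul_log {S : Type*} [Fintype S] {Ψ : Set (S → ℝ)}
    {𝒟 : Set (PMF S)} {ε : ℝ} {T : ℕ} {d : ℕ → PMF S} (hd : EluderSeq₂ Ψ 𝒟 ε T d)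
    (hε : 0 < ε) (hΨ : ∀ f ∈ Ψ, ∀ s, f s ∈ Set.Icc (0 : ℝ) 1) :
    (T : ℝ) ≤ 3 * Fintype.card S * Real.log (1 + T / ε ^ 2) := by
  have h := Real.log_le_log (by positivity) (hd.three_halves_pow_le hε hΨ)
  rw [Real.log_pow, Real.log_pow] at h
  have h32 : 1 / 3 ≤ Real.log (3 / 2) := by
    linarith [Real.one_sub_inv_le_log_of_pos (by norm_num : (0 : ℝ) < 3 / 2)]
  nlinarith

/-- Q-type `ℓ₂` distributional eluder dimension bound for tabular MDPs: for any
class `Ψ` of `[0,1]`-valued functions on a finite set `S` and any set `𝒟` of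
distributions on `S`, `DE₂(Ψ, 𝒟, ε) ≤ 24·|S|·log(1 + 4|S|/ε²)`. -/
theorem tabular_eluder_bound {S : Type*} [Fintype S]
    (Ψ : Set (S → ℝ)) (𝒟 : Set (PMF S)) (ε : ℝ) (hε : 0 < ε)
    (hΨ : ∀ f ∈ Ψ, ∀ s, f s ∈ Set.Icc (0 : ℝ) 1)
    (Ddim : ℕ) (hdim : DEdim₂ Ψ 𝒟 ε = (Ddim : ℕ∞)) :
    (Ddim : ℝ) ≤ 24 * (Fintype.card S) *
      Real.log (1 + 4 * (Fintype.card S) / ε ^ 2) := by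
  have hlog_nonneg : 0 ≤ Real.log (1 + 4 * (Fintype.card S) / ε ^ 2) :=
    Real.log_nonneg (le_add_of_nonneg_right (by positivity))
  rcases eq_or_ne Ddim 0 with rfl | hD
  · rw [Nat.cast_zero]
    exact mul_nonneg (by positivity) hlog_nonneg
  obtain ⟨d, hd⟩ := exists_eluderSeq₂_of_DEdim₂_eq hdim hD
  calc (Ddim : ℝ) ≤ 4 * (3 * Fintype.card S) * Real.log (1 + 3 * Fintype.card S / ε ^ 2) :=
        Real.le_four_mul_log_one_add_div_of_le (by positivity) (by positivity) (by positivity)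
          (hd.length_le_mul_log hε hΨ)
    _ ≤ 4 * (3 * Fintype.card S) * Real.log (1 + 4 * Fintype.card S / ε ^ 2) := by
        gcongr; norm_num
    _ ≤ 24 * Fintype.card S * Real.log (1 + 4 * Fintype.card S / ε ^ 2) := by
        linarith [mul_nonneg (Nat.cast_nonneg (Fintype.card S)) hlog_nonneg]
end

section
/- From the per-episode inequality V^{π_k} − V* ≤ √(4e·V^{π_k} + 17H·Δ_k)·√(H·Δ_k) with Δ_k ≥ 0, one can deduce first V^{π_k} ≤ 2V* + 26H·Δ_k and then V^{π_k} − V* ≤ √(8e·V* + 300H·Δ_k)·√(H·Δ_k). -/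
/-- From the per-episode inequality
`V^{π_k} − V* ≤ √(4e·V^{π_k} + 17H·Δ_k)·√(H·Δ_k)` one can deduce
`V^{π_k} ≤ 2V* + 26H·Δ_k` and then
`V^{π_k} − V* ≤ √(8e·V* + 300H·Δ_k)·√(H·Δ_k)`. -/
theorem per_episode_rearrange (V Vstar Δ H : ℝ)
    (hVs : 0 ≤ Vstar) (hle : Vstar ≤ V) (hΔ : 0 ≤ Δ) (hH : 1 ≤ H)
    (h : V - Vstar ≤
      Real.sqrt (4 * Real.exp 1 * V + 17 * H * Δ) * Real.sqrt (H * Δ)) :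
    V ≤ 2 * Vstar + 26 * H * Δ ∧
      V - Vstar ≤
        Real.sqrt (8 * Real.exp 1 * Vstar + 300 * H * Δ) * Real.sqrt (H * Δ) := by
  have he : 0 < Real.exp 1 := Real.exp_pos 1
  have heb : Real.exp 1 < 2.7182818286 := Real.exp_one_lt_d9
  have hHΔ : 0 ≤ H * Δ := mul_nonneg (by linarith) hΔ
  have hV0 : 0 ≤ V := le_trans hVs hle
  set s := Real.sqrt (H * Δ) with hsdef
  have hs0 : 0 ≤ s := Real.sqrt_nonneg _
  have hs2 : s ^ 2 = H * Δ := Real.sq_sqrt hHΔ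
  set u := Real.sqrt V with hudef
  have hu0 : 0 ≤ u := Real.sqrt_nonneg _
  have hu2 : u ^ 2 = V := Real.sq_sqrt hV0
  set q := Real.sqrt (Real.exp 1) with hqdef
  have hq0 : 0 ≤ q := Real.sqrt_nonneg _
  have hq2 : q ^ 2 = Real.exp 1 := Real.sq_sqrt he.le
  have hr : Real.sqrt (4 * Real.exp 1 * V + 17 * H * Δ) ≤ 2 * q * u + 5 * s := by
    have hb : 4 * Real.exp 1 * V + 17 * H * Δ ≤ (2 * q * u + 5 * s) ^ 2 := by
      nlinarith [mul_nonneg (mul_nonneg hq0 hu0) hs0]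
    calc Real.sqrt (4 * Real.exp 1 * V + 17 * H * Δ)
        ≤ Real.sqrt ((2 * q * u + 5 * s) ^ 2) := Real.sqrt_le_sqrt hb
      _ = 2 * q * u + 5 * s := Real.sqrt_sq (by positivity)
  have h1 : V - Vstar ≤ (2 * q * u + 5 * s) * s :=
    le_trans h (mul_le_mul_of_nonneg_right hr hs0)
  have hamgm : 2 * q * u * s ≤ u ^ 2 / 2 + 2 * q ^ 2 * s ^ 2 := by
    nlinarith [sq_nonneg (u - 2 * q * s)]
  have hVb : V ≤ 2 * Vstar + 26 * H * Δ := by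
    nlinarith [h1, hamgm, hs2, hu2, hq2, heb, hHΔ]
  refine ⟨hVb, ?_⟩
  have hkey : 4 * Real.exp 1 * V + 17 * H * Δ ≤ 8 * Real.exp 1 * Vstar + 300 * H * Δ := by
    nlinarith [mul_le_mul_of_nonneg_left hVb (by positivity : (0:ℝ) ≤ 4 * Real.exp 1),
      mul_nonneg he.le hHΔ, heb, hHΔ]
  exact le_trans h (mul_le_mul_of_nonneg_right (Real.sqrt_le_sqrt hkey) hs0)
end

section
/- Layer-cake / truncated integral bound: Let a₁,…,a_k ∈ [0, C] be nonnegative reals bounded by C ≥ 1, and suppose for every y > 0 the count satisfies #{t : a_t > y} ≤ (β/y + 1)·d(y) + 1 where d(y) is nonincreasing in y and d denotes d(ω) for fixed 0 < ω ≤ C. Then Σ_{t=1}^k a_t ≤ kω + (d+1)·C + d·β·log(C/ω). -/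
/-!
Write each `a t ≤ C` as `ω` plus the length of `{y ∈ (ω, C] | y < a t}`; summing over `t` turns
`∑ a t` into at most `k ω + ∫_ω^C N(y) dy`, where `N(y) = #{t | y < a t}`. On `[ω, C]` the count
hypothesis and `d y ≤ d ω` bound `N(y)` by `d ω β / y + d ω + 1`, whose integral is
`d ω β log (C / ω) + (d ω + 1)(C - ω)`.
-/

open MeasureTheory intervalIntegral Finset

lemma antitone_ite_lt_one (c : ℝ) : Antitone fun y : ℝ => if y < c then (1 : ℝ) else 0 := by
  intro y z hyz
  by_cases hz : z < c
  · simp [hz, hyz.trans_lt hz]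
  · simp only [hz, if_false]
    split_ifs <;> norm_num

lemma intervalIntegral_ite_lt_one {c ω C : ℝ} (hωC : ω ≤ C) (hcC : c ≤ C) :
    ∫ y in ω..C, (if y < c then (1 : ℝ) else 0) = max (c - ω) 0 := by
  have hset : Set.Iio c ∩ Set.Ioc ω C = Set.Ioo ω c := by
    ext y
    simp only [Set.mem_inter_iff, Set.mem_Iio, Set.mem_Ioc, Set.mem_Ioo]
    constructor
    · rintro ⟨hyc, hωy, -⟩
      exact ⟨hωy, hyc⟩
    · rintro ⟨hωy, hyc⟩
      exact ⟨hyc, hωy, (hyc.trans_le hcC).le⟩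
  have hind : (fun y : ℝ => if y < c then (1 : ℝ) else 0) = (Set.Iio c).indicator 1 := by
    funext y
    simp [Set.indicator_apply]
  rw [hind, integral_of_le hωC, integral_indicator_one measurableSet_Iio,
    measureReal_restrict_apply measurableSet_Iio, hset, Real.volume_real_Ioo]

lemma le_add_intervalIntegral_ite_lt_one {c ω C : ℝ} (hωC : ω ≤ C) (hcC : c ≤ C) :
    c ≤ ω + ∫ y in ω..C, (if y < c then (1 : ℝ) else 0) := by
  rw [intervalIntegral_ite_lt_one hωC hcC]
  linarith [le_max_left (c - ω) 0]

lemma antitone_card_filter_lt {ι : Type*} (s : Finset ι) (a : ι → ℝ) :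
    Antitone fun y : ℝ => (#{t ∈ s | y < a t} : ℝ) := fun _ _ hyz =>
  Nat.cast_le.mpr (card_le_card (monotone_filter_right s fun _ _ h => hyz.trans_lt h))

lemma sum_le_card_mul_add_intervalIntegral_card_filter_lt {ι : Type*} (s : Finset ι)
    (a : ι → ℝ) {ω C : ℝ} (hωC : ω ≤ C) (ha : ∀ t ∈ s, a t ≤ C) :
    ∑ t ∈ s, a t ≤ #s * ω + ∫ y in ω..C, (#{t ∈ s | y < a t} : ℝ) := by
  have hcount : (fun y : ℝ => (#{t ∈ s | y < a t} : ℝ)) =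
      fun y => ∑ t ∈ s, if y < a t then (1 : ℝ) else 0 := by
    funext y
    rw [sum_boole]
  rw [hcount, integral_finsetSum fun t _ => (antitone_ite_lt_one (a t)).intervalIntegrable,
    ← nsmul_eq_mul, ← sum_const, ← sum_add_distrib]
  exact sum_le_sum fun t ht => le_add_intervalIntegral_ite_lt_one hωC (ha t ht)

lemma intervalIntegrable_mul_inv_add_const {ω C : ℝ} (hω : 0 < ω) (hωC : ω ≤ C) (p q : ℝ) :
    IntervalIntegrable (fun y : ℝ => p * y⁻¹ + q) volume ω C := by
  have hinv : IntervalIntegrable (fun y : ℝ => y⁻¹) volume ω C :=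
    intervalIntegrable_inv_iff.mpr <| Or.inr fun h0 => by
      rw [Set.uIcc_of_le hωC] at h0
      exact hω.not_ge h0.1
  exact (hinv.const_mul p).add intervalIntegrable_const

lemma integral_mul_inv_add_const {ω C : ℝ} (hω : 0 < ω) (hωC : ω ≤ C) (p q : ℝ) :
    ∫ y in ω..C, (p * y⁻¹ + q) = p * Real.log (C / ω) + q * (C - ω) := by
  have hinv := intervalIntegrable_mul_inv_add_const hω hωC 1 0
  simp only [one_mul, add_zero] at hinv
  rw [integral_add (hinv.const_mul p) intervalIntegrable_const,
    intervalIntegral.integral_const_mul, integral_inv_of_pos hω (hω.trans_le hωC),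
    intervalIntegral.integral_const, smul_eq_mul, mul_comm q]

theorem layer_cake_bound_general (k : ℕ) (a : ℕ → ℝ) (C β ω : ℝ) (d : ℝ → ℝ)
    (hβ : 0 ≤ β) (hω0 : 0 < ω) (hωC : ω ≤ C)
    (ha : ∀ t < k, a t ∈ Set.Icc (0 : ℝ) C)
    (hd0 : ∀ y, 0 < y → 0 ≤ d y)
    (hdmono : ∀ y z : ℝ, 0 < y → y ≤ z → d z ≤ d y)
    (hcount : ∀ y : ℝ, 0 < y →
      (((Finset.range k).filter fun t => y < a t).card : ℝ) ≤ (β / y + 1) * d y + 1) :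
    ∑ t ∈ Finset.range k, a t ≤ k * ω + (d ω + 1) * C + d ω * β * Real.log (C / ω) := by
  set D := d ω
  have hD : 0 ≤ D := hd0 ω hω0
  have hcount_le :
      ∀ y ∈ Set.Icc ω C, (#{t ∈ range k | y < a t} : ℝ) ≤ D * β * y⁻¹ + (D + 1) := by
    intro y hy
    have hy0 : 0 < y := hω0.trans_le hy.1
    calc (#{t ∈ range k | y < a t} : ℝ) ≤ (β / y + 1) * d y + 1 := hcount y hy0
      _ ≤ (β / y + 1) * D + 1 := by gcongr; exact hdmono ω y hω0 hy.1
      _ = D * β * y⁻¹ + (D + 1) := by ring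
  calc ∑ t ∈ range k, a t ≤ k * ω + ∫ y in ω..C, (#{t ∈ range k | y < a t} : ℝ) := by
        simpa using sum_le_card_mul_add_intervalIntegral_card_filter_lt (range k) a hωC
          fun t ht => (ha t (mem_range.mp ht)).2
    _ ≤ k * ω + ∫ y in ω..C, (D * β * y⁻¹ + (D + 1)) := by
        gcongr
        exact integral_mono_on hωC (antitone_card_filter_lt _ a).intervalIntegrable
          (intervalIntegrable_mul_inv_add_const hω0 hωC _ _) hcount_le
    _ = k * ω + ((D + 1) * (C - ω) + D * β * Real.log (C / ω)) := by
        rw [integral_mul_inv_add_const hω0 hωC, add_comm (D * β * _)]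
    _ ≤ k * ω + (D + 1) * C + D * β * Real.log (C / ω) := by
        linarith [mul_nonneg (by linarith : 0 ≤ D + 1) hω0.le]

/-- Layer-cake / truncated integral bound: if `a t ∈ [0, C]` for `t < k`, the
counts satisfy `#{t < k : a t > y} ≤ (β/y + 1)·d y + 1` for all `y > 0`, and
`d` is nonincreasing on `(0, ∞)`, then for any `0 < ω ≤ C`,
`Σ_{t<k} a t ≤ k·ω + (d ω + 1)·C + d ω·β·log(C/ω)`. -/
theorem layer_cake_bound (k : ℕ) (a : ℕ → ℝ) (C β ω : ℝ) (d : ℝ → ℝ)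
    (hC : 1 ≤ C) (hβ : 0 ≤ β) (hω0 : 0 < ω) (hωC : ω ≤ C)
    (ha : ∀ t < k, a t ∈ Set.Icc (0 : ℝ) C)
    (hd0 : ∀ y, 0 < y → 0 ≤ d y)
    (hdmono : ∀ y z : ℝ, 0 < y → y ≤ z → d z ≤ d y)
    (hcount : ∀ y : ℝ, 0 < y →
      (((Finset.range k).filter fun t => y < a t).card : ℝ) ≤ (β / y + 1) * d y + 1) :
    ∑ t ∈ Finset.range k, a t ≤ k * ω + (d ω + 1) * C + d ω * β * Real.log (C / ω) :=
  layer_cake_bound_general k a C β ω d hβ hω0 hωC ha hd0 hdmono hcount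
end
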